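/- arXiv:2507.14621 — 2 statements merged into one kernel-verified Lean document; each statement's English description precedes it below -/
import Mathlib

section
/- Let n, P ≥ 1, let z be an n×P real matrix, ν ∈ ℝⁿ nonzero, S a symmetric positive definite P×P matrix with symmetric positive definite square root S^{1/2} and inverse square root S^{-1/2}, T > 0 real, and assume zᵀν ≠ 0. Define Π = I_n − ν νᵀ/‖ν‖², J = (S^{-1/2} zᵀν)/‖S^{-1/2} zᵀν‖, D = ‖√T · S^{-1/2} zᵀν‖, and for φ ∈ ℝ define the perturbed data z(φ) = Π z + φ · (ν/(√T ‖ν‖²)) Jᵀ S^{1/2}. Then z(D) = z: evaluating the perturbation at the realized value of the square-root Wald statistic recovers the original data. -/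
open Matrix Finset

noncomputable def eucNorm {ι : Type*} [Fintype ι] (v : ι → ℝ) : ℝ :=
  Real.sqrt (∑ p, v p ^ 2)

/-! The projection `Π z` removes from `z` its component `ν (zᵀν)ᵀ / ‖ν‖²` along `ν`. At `φ = D`
the scalar `D` cancels the normalisation of `J`, and by the symmetry of `S^{1/2}`,
`D Jᵀ S^{1/2} = √T (S^{1/2} S^{-1/2} zᵀν)ᵀ = √T (zᵀν)ᵀ`; so the perturbation term is exactly the
removed component. -/

section EucNorm

variable {ι : Type*} [Fintype ι]

theorem eucNorm_eq_norm (v : ι → ℝ) : eucNorm v = ‖WithLp.toLp 2 v‖ := by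
  simp [eucNorm, EuclideanSpace.norm_eq]

theorem eucNorm_pos {v : ι → ℝ} (hv : v ≠ 0) : 0 < eucNorm v := by
  rw [eucNorm_eq_norm]
  exact norm_pos_iff.mpr (by simpa using hv)

theorem eucNorm_smul (c : ℝ) (v : ι → ℝ) : eucNorm (c • v) = |c| * eucNorm v := by
  rw [eucNorm_eq_norm, eucNorm_eq_norm, WithLp.toLp_smul, norm_smul, Real.norm_eq_abs]

end EucNorm

theorem one_sub_smul_vecMulVec_mul_add {m n R : Type*} [Fintype m] [DecidableEq m] [CommRing R]
    (c : R) (ν : m → R) (z : Matrix m n R) :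
    (1 - c • vecMulVec ν ν) * z + c • vecMulVec ν (zᵀ *ᵥ ν) = z := by
  rw [Matrix.sub_mul, Matrix.one_mul, Matrix.smul_mul, vecMulVec_mul, ← mulVec_transpose,
    sub_add_cancel]

theorem stmt5_general {n P : ℕ}
    (z : Matrix (Fin n) (Fin P) ℝ) (ν : Fin n → ℝ) (hν : ν ≠ 0)
    (Shalf Sinvhalf : Matrix (Fin P) (Fin P) ℝ)
    (hShalf : Shalf.PosDef)
    (hinv : Sinvhalf * Shalf = 1)
    (T : ℝ) (hT : 0 < T)
    (hzν : zᵀ *ᵥ ν ≠ 0)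
    (Pmat : Matrix (Fin n) (Fin n) ℝ)
    (hPmat : Pmat = 1 - (eucNorm ν ^ 2)⁻¹ • vecMulVec ν ν)
    (J : Fin P → ℝ)
    (hJ : J = (eucNorm (Sinvhalf *ᵥ (zᵀ *ᵥ ν)))⁻¹ • (Sinvhalf *ᵥ (zᵀ *ᵥ ν)))
    (D : ℝ) (hD : D = eucNorm (Real.sqrt T • (Sinvhalf *ᵥ (zᵀ *ᵥ ν))))
    (zφ : ℝ → Matrix (Fin n) (Fin P) ℝ)
    (hzφ : ∀ φ : ℝ,
      zφ φ = Pmat * z + φ • vecMulVec ((Real.sqrt T * eucNorm ν ^ 2)⁻¹ • ν) (J ᵥ* Shalf)) :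
    zφ D = z := by
  set u := zᵀ *ᵥ ν
  set w := Sinvhalf *ᵥ u
  have hw_u : Shalf *ᵥ w = u := by
    rw [mulVec_mulVec, mul_eq_one_comm.mp hinv, one_mulVec]
  have hw : eucNorm w ≠ 0 := (eucNorm_pos fun h => hzν (by rw [← hw_u, h, mulVec_zero])).ne'
  have hν' : eucNorm ν ≠ 0 := (eucNorm_pos hν).ne'
  have hT' : Real.sqrt T ≠ 0 := (Real.sqrt_pos.mpr hT).ne'
  have hJ_Shalf : J ᵥ* Shalf = (eucNorm w)⁻¹ • u := by
    have hsymm : Shalfᵀ = Shalf := hShalf.isHermitian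
    rw [hJ, ← hsymm, vecMul_transpose, mulVec_smul, hw_u]
  have hD_eq : D = Real.sqrt T * eucNorm w := by
    rw [hD, eucNorm_smul, abs_of_nonneg (Real.sqrt_nonneg T)]
  have hterm : D • vecMulVec ((Real.sqrt T * eucNorm ν ^ 2)⁻¹ • ν) (J ᵥ* Shalf)
      = (eucNorm ν ^ 2)⁻¹ • vecMulVec ν u := by
    rw [hJ_Shalf, hD_eq, smul_vecMulVec, vecMulVec_smul, smul_smul, smul_smul]
    congr 1
    field_simp
  rw [hzφ, hterm, hPmat, one_sub_smul_vecMulVec_mul_add]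

/-- Evaluating the perturbed data `z(φ) = Π z + φ (ν/(√T ‖ν‖²)) Jᵀ S^{1/2}` of the
selective inference procedure at the realized square-root Wald statistic
`φ = D = ‖√T S^{-1/2} zᵀν‖` recovers the original data: `z(D) = z`. -/
theorem stmt5 {n P : ℕ} (hn : 1 ≤ n) (hP : 1 ≤ P)
    (z : Matrix (Fin n) (Fin P) ℝ) (ν : Fin n → ℝ) (hν : ν ≠ 0)
    (S Shalf Sinvhalf : Matrix (Fin P) (Fin P) ℝ)
    (hS : S.PosDef) (hShalf : Shalf.PosDef) (hSinvhalf : Sinvhalf.PosDef)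
    (hsq : Shalf * Shalf = S) (hinv : Sinvhalf * Shalf = 1)
    (T : ℝ) (hT : 0 < T)
    (hzν : zᵀ *ᵥ ν ≠ 0)
    (Pmat : Matrix (Fin n) (Fin n) ℝ)
    (hPmat : Pmat = 1 - (eucNorm ν ^ 2)⁻¹ • vecMulVec ν ν)
    (J : Fin P → ℝ)
    (hJ : J = (eucNorm (Sinvhalf *ᵥ (zᵀ *ᵥ ν)))⁻¹ • (Sinvhalf *ᵥ (zᵀ *ᵥ ν)))
    (D : ℝ) (hD : D = eucNorm (Real.sqrt T • (Sinvhalf *ᵥ (zᵀ *ᵥ ν))))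
    (zφ : ℝ → Matrix (Fin n) (Fin P) ℝ)
    (hzφ : ∀ φ : ℝ,
      zφ φ = Pmat * z + φ • vecMulVec ((Real.sqrt T * eucNorm ν ^ 2)⁻¹ • ν) (J ᵥ* Shalf)) :
    zφ D = z :=
  stmt5_general z ν hν Shalf Sinvhalf hShalf hinv T hT hzν Pmat hPmat J hJ D hD zφ hzφ
end

section
/- Let n, P ≥ 1, z an n×P real matrix, ν ∈ ℝⁿ nonzero, S a symmetric positive definite P×P matrix with symmetric positive definite square root S^{1/2} and inverse square root S^{-1/2}, T > 0 real, and zᵀν ≠ 0. Let Π = I_n − ννᵀ/‖ν‖², J = (S^{-1/2} zᵀν)/‖S^{-1/2} zᵀν‖, j = (zᵀν)/‖zᵀν‖, and for φ ∈ ℝ set z(φ) = Π z + φ (ν/(√T‖ν‖²)) Jᵀ S^{1/2}. Then z(φ) = z − (‖zᵀν‖/‖ν‖²) ν jᵀ + φ · (‖zᵀν‖/(√T · ‖S^{-1/2} zᵀν‖ · ‖ν‖²)) ν jᵀ. In particular z(φ) depends on φ only through a multiple of the rank-one matrix ν jᵀ. -/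
/-!
Since `S^{-1/2}` is symmetric with `S^{-1/2} S^{1/2} = 1`, we get `Jᵀ S^{1/2} = (zᵀν)ᵀ / ‖S^{-1/2} zᵀν‖`,
while `Π z = z - ‖ν‖⁻² ν (zᵀν)ᵀ`. Writing `zᵀν = ‖zᵀν‖ j` (true also when `zᵀν = 0`) turns both terms into multiples of `ν jᵀ`.
-/

open Matrix Finset

/-- Euclidean norm of a finitely indexed real vector. -/
noncomputable def euclidNorm {ι : Type*} [Fintype ι] (v : ι → ℝ) : ℝ :=
  Real.sqrt (∑ p, v p ^ 2)

lemma euclidNorm_eq_norm {ι : Type*} [Fintype ι] (v : ι → ℝ) :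
    euclidNorm v = ‖WithLp.toLp 2 v‖ := by
  simp [euclidNorm, EuclideanSpace.norm_eq]

lemma euclidNorm_eq_zero {ι : Type*} [Fintype ι] {v : ι → ℝ} :
    euclidNorm v = 0 ↔ v = 0 := by
  rw [euclidNorm_eq_norm, norm_eq_zero, WithLp.toLp_eq_zero]

lemma euclidNorm_smul_inv_smul {ι : Type*} [Fintype ι] (v : ι → ℝ) :
    euclidNorm v • (euclidNorm v)⁻¹ • v = v := by
  by_cases hv : v = 0
  · simp [hv]
  · exact smul_inv_smul₀ (mt euclidNorm_eq_zero.mp hv) v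

lemma one_sub_smul_vecMulVec_mul {m n R : Type*} [Fintype m] [DecidableEq m] [CommRing R]
    (c : R) (ν : m → R) (z : Matrix m n R) :
    (1 - c • vecMulVec ν ν) * z = z - c • vecMulVec ν (zᵀ *ᵥ ν) := by
  rw [Matrix.sub_mul, Matrix.one_mul, Matrix.smul_mul, vecMulVec_mul, mulVec_transpose]

lemma mulVec_vecMul_of_mul_eq_one {m R : Type*} [Fintype m] [DecidableEq m] [CommRing R]
    {A B : Matrix m m R} (hA : A.IsSymm) (hAB : A * B = 1) (w : m → R) :
    (A *ᵥ w) ᵥ* B = w := by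
  rw [vecMul_mulVec, hA.eq, hAB, vecMul_one]

theorem stmt6_general {n P : ℕ}
    (z : Matrix (Fin n) (Fin P) ℝ) (ν : Fin n → ℝ)
    (Shalf Sinvhalf : Matrix (Fin P) (Fin P) ℝ)
    (hSinvhalf : Sinvhalf.PosDef)
    (hinv : Sinvhalf * Shalf = 1)
    (T : ℝ)
    (Pmat : Matrix (Fin n) (Fin n) ℝ)
    (hPmat : Pmat = 1 - (euclidNorm ν ^ 2)⁻¹ • vecMulVec ν ν)
    (J : Fin P → ℝ)
    (hJ : J = (euclidNorm (Sinvhalf *ᵥ (zᵀ *ᵥ ν)))⁻¹ • (Sinvhalf *ᵥ (zᵀ *ᵥ ν)))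
    (j : Fin P → ℝ)
    (hj : j = (euclidNorm (zᵀ *ᵥ ν))⁻¹ • (zᵀ *ᵥ ν))
    (zφ : ℝ → Matrix (Fin n) (Fin P) ℝ)
    (hzφ : ∀ φ : ℝ,
      zφ φ = Pmat * z + φ • vecMulVec ((Real.sqrt T * euclidNorm ν ^ 2)⁻¹ • ν) (J ᵥ* Shalf)) :
    ∀ φ : ℝ,
      zφ φ = z - (euclidNorm (zᵀ *ᵥ ν) / euclidNorm ν ^ 2) • vecMulVec ν j
        + (φ * (euclidNorm (zᵀ *ᵥ ν) /
            (Real.sqrt T * euclidNorm (Sinvhalf *ᵥ (zᵀ *ᵥ ν)) * euclidNorm ν ^ 2))) • vecMulVec ν j := by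
  intro φ
  have hJShalf : J ᵥ* Shalf = (euclidNorm (Sinvhalf *ᵥ (zᵀ *ᵥ ν)))⁻¹ • (zᵀ *ᵥ ν) := by
    rw [hJ, smul_vecMul, mulVec_vecMul_of_mul_eq_one
      (isHermitian_iff_isSymm.mp hSinvhalf.isHermitian) hinv]
  have hw : zᵀ *ᵥ ν = euclidNorm (zᵀ *ᵥ ν) • j := by rw [hj, euclidNorm_smul_inv_smul]
  rw [hzφ, hPmat, one_sub_smul_vecMulVec_mul, hJShalf]
  generalize euclidNorm (Sinvhalf *ᵥ (zᵀ *ᵥ ν)) = b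
  generalize euclidNorm (zᵀ *ᵥ ν) = a at hw ⊢
  rw [hw]
  simp only [smul_vecMulVec, vecMulVec_smul]
  module

/-- Identity (perturbed2): the perturbed data of the selective inference procedure
can be rewritten as
`z(φ) = z − (‖zᵀν‖/‖ν‖²) ν jᵀ + φ (‖zᵀν‖/(√T ‖S^{-1/2} zᵀν‖ ‖ν‖²)) ν jᵀ`,
where `j` is the unit direction of `zᵀν`; in particular `z(φ)` depends on `φ`
only through a multiple of the rank-one matrix `ν jᵀ`. -/
theorem stmt6 {n P : ℕ} (hn : 1 ≤ n) (hP : 1 ≤ P)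
    (z : Matrix (Fin n) (Fin P) ℝ) (ν : Fin n → ℝ) (hν : ν ≠ 0)
    (S Shalf Sinvhalf : Matrix (Fin P) (Fin P) ℝ)
    (hS : S.PosDef) (hShalf : Shalf.PosDef) (hSinvhalf : Sinvhalf.PosDef)
    (hsq : Shalf * Shalf = S) (hinv : Sinvhalf * Shalf = 1)
    (T : ℝ) (hT : 0 < T)
    (hzν : zᵀ *ᵥ ν ≠ 0)
    (Pmat : Matrix (Fin n) (Fin n) ℝ)
    (hPmat : Pmat = 1 - (euclidNorm ν ^ 2)⁻¹ • vecMulVec ν ν)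
    (J : Fin P → ℝ)
    (hJ : J = (euclidNorm (Sinvhalf *ᵥ (zᵀ *ᵥ ν)))⁻¹ • (Sinvhalf *ᵥ (zᵀ *ᵥ ν)))
    (j : Fin P → ℝ)
    (hj : j = (euclidNorm (zᵀ *ᵥ ν))⁻¹ • (zᵀ *ᵥ ν))
    (zφ : ℝ → Matrix (Fin n) (Fin P) ℝ)
    (hzφ : ∀ φ : ℝ,
      zφ φ = Pmat * z + φ • vecMulVec ((Real.sqrt T * euclidNorm ν ^ 2)⁻¹ • ν) (J ᵥ* Shalf)) :
    ∀ φ : ℝ,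
      zφ φ = z - (euclidNorm (zᵀ *ᵥ ν) / euclidNorm ν ^ 2) • vecMulVec ν j
        + (φ * (euclidNorm (zᵀ *ᵥ ν) /
            (Real.sqrt T * euclidNorm (Sinvhalf *ᵥ (zᵀ *ᵥ ν)) * euclidNorm ν ^ 2))) • vecMulVec ν j :=
  stmt6_general z ν Shalf Sinvhalf hSinvhalf hinv T Pmat hPmat J hJ j hj zφ hzφ
end
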